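/- Let p, s, q, t ∈ ℝ^n be vectors with nonnegative entries such that p ≺ s and q ≺ t. Then the entrywise (Hadamard) product satisfies the weak majorization p ∘ q ≺_w s↓ ∘ t↓, where (a ∘ b)_k = a_k b_k and s↓, t↓ are the descending rearrangements of s and t. -/
import Mathlib


open scoped BigOperators ComplexOrder

/-- The descending rearrangement `v↓` of a vector `v ∈ ℝⁿ`. -/
noncomputable def descSort {n : ℕ} (v : Fin n → ℝ) : Fin n → ℝ :=
  fun i => v (Tuple.sort v i.rev)

/-- The sum of the `k` largest entries of `v`. -/
noncomputable def sumTop {n : ℕ} (v : Fin n → ℝ) (k : ℕ) : ℝ :=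
  ∑ i ∈ Finset.univ.filter (fun i : Fin n => (i : ℕ) < k), descSort v i

/-- Majorization `v ≺ w`: for every `k`, the sum of the `k` largest entries of `v` is at
most that of `w`, and the total sums agree. -/
noncomputable def Majorizes {n : ℕ} (v w : Fin n → ℝ) : Prop :=
  (∀ k : ℕ, sumTop v k ≤ sumTop w k) ∧ (∑ i, v i = ∑ i, w i)

/-- Weak majorization `v ≺_w w`: only the partial-sum inequalities are required. -/
noncomputable def WeakMajorizes {n : ℕ} (v w : Fin n → ℝ) : Prop :=
  ∀ k : ℕ, sumTop v k ≤ sumTop w k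

/-! ### Auxiliary material -/

section Aux

variable {n : ℕ}

/-- extend a `Fin n` vector by zero to `ℕ`. -/
noncomputable def extF {n : ℕ} (w : Fin n → ℝ) : ℕ → ℝ :=
  fun i => if h : i < n then w ⟨i, h⟩ else 0

lemma extF_nonneg {w : Fin n → ℝ} (hw : ∀ i, 0 ≤ w i) (i : ℕ) : 0 ≤ extF w i := by
  unfold extF; split <;> simp [hw]

lemma extF_antitone {w : Fin n → ℝ} (hw : Antitone w) (hw0 : ∀ i, 0 ≤ w i) :
    Antitone (extF w) := by
  intro i j hij
  unfold extF
  split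
  · split
    · exact hw (by exact Fin.mk_le_mk.2 hij)
    · omega
  · split
    · exact hw0 _
    · exact le_refl _

lemma sum_extF (w : Fin n → ℝ) (j : ℕ) :
    ∑ i ∈ Finset.range j, extF w i
      = ∑ i ∈ Finset.univ.filter (fun i : Fin n => (i : ℕ) < j), w i := by
  induction j with
  | zero => simp
  | succ j ih =>
    rw [Finset.sum_range_succ, ih, Finset.sum_filter, Finset.sum_filter]
    have h1 : ∀ i : Fin n, (if (i : ℕ) < j + 1 then w i else 0)
        = (if (i : ℕ) < j then w i else 0) + (if (i : ℕ) = j then w i else 0) := by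
      intro i
      rcases lt_trichotomy (i : ℕ) j with h | h | h
      · simp [h, Nat.lt_succ_of_lt h, Nat.ne_of_lt h]
      · simp [h]
      · have : ¬ ((i : ℕ) < j + 1) := by omega
        simp [this, Nat.lt_asymm h, Nat.ne_of_gt h]
    rw [Finset.sum_congr rfl (fun i _ => h1 i), Finset.sum_add_distrib]
    congr 1
    by_cases hj : j < n
    · have h2 : ∀ i : Fin n, (if (i : ℕ) = j then w i else 0)
          = (if i = ⟨j, hj⟩ then w i else 0) := by
        intro i; simp [Fin.ext_iff]
      rw [Finset.sum_congr rfl (fun i _ => h2 i), Finset.sum_ite_eq' Finset.univ ⟨j, hj⟩ w]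
      simp [extF, hj]
    · have h2 : ∀ i : Fin n, (if (i : ℕ) = j then w i else 0) = 0 := by
        intro i
        have : (i : ℕ) ≠ j := by have := i.isLt; omega
        simp [this]
      rw [Finset.sum_congr rfl (fun i _ => h2 i)]
      simp [extF, hj]

/-- the permutation realizing `descSort`. -/
noncomputable def sortPerm {n : ℕ} (v : Fin n → ℝ) : Equiv.Perm (Fin n) :=
  Fin.revPerm.trans (Tuple.sort v)

lemma descSort_eq (v : Fin n → ℝ) (i : Fin n) : descSort v i = v (sortPerm v i) := rfl

lemma descSort_antitone (v : Fin n → ℝ) : Antitone (descSort v) := by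
  intro i j hij
  have h := Tuple.monotone_sort v (a := j.rev) (b := i.rev) (by simpa using hij)
  simpa [descSort] using h

lemma descSort_nonneg {v : Fin n → ℝ} (hv : ∀ i, 0 ≤ v i) (i : Fin n) : 0 ≤ descSort v i :=
  hv _

lemma strictMono_le_apply {m : ℕ} {f : Fin m → Fin n} (hf : StrictMono f) (i : Fin m) :
    (i : ℕ) ≤ (f i : ℕ) := by
  obtain ⟨i, hi⟩ := i
  induction i with
  | zero => exact Nat.zero_le _
  | succ i ih =>
    have h1 : (f ⟨i, by omega⟩ : ℕ) < (f ⟨i + 1, hi⟩ : ℕ) := hf (by simp [Fin.mk_lt_mk])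
    have h2 := ih (by omega)
    simp only [Fin.val_mk] at h1 h2 ⊢
    omega

lemma sumTop_min (v : Fin n → ℝ) (k : ℕ) : sumTop v k = sumTop v (min k n) := by
  unfold sumTop
  refine Finset.sum_congr (Finset.filter_congr ?_) fun _ _ => rfl
  intro i _
  have := i.isLt
  omega

lemma sumTop_mono {v : Fin n → ℝ} (hv : ∀ i, 0 ≤ v i) : Monotone (sumTop v) := by
  intro k k' hk
  refine Finset.sum_le_sum_of_subset_of_nonneg ?_ (fun i _ _ => descSort_nonneg hv i)
  intro i hi
  simp only [Finset.mem_filter, Finset.mem_univ, true_and] at hi ⊢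
  omega

/-- Any subset-sum (through an injective map) is at most the corresponding top sum. -/
lemma sum_le_sumTop {m : ℕ} (v : Fin n → ℝ) (f : Fin m → Fin n)
    (hf : Function.Injective f) (S : Finset (Fin m)) :
    ∑ i ∈ S, v (f i) ≤ sumTop v S.card := by
  classical
  set T : Finset (Fin n) := S.image (fun i => (sortPerm v).symm (f i)) with hT
  have hinj : Function.Injective (fun i : Fin m => (sortPerm v).symm (f i)) :=
    (sortPerm v).symm.injective.comp hf
  have hTcard : T.card = S.card := Finset.card_image_of_injective _ hinj
  have hsum : ∑ i ∈ S, v (f i) = ∑ j ∈ T, descSort v j := by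
    rw [hT, Finset.sum_image (fun a _ b _ h => hinj h)]
    refine Finset.sum_congr rfl fun i _ => ?_
    rw [descSort_eq]
    simp
  rw [hsum]
  set c := S.card with hc
  have hcn : T.card = c := hTcard
  set e := T.orderEmbOfFin hcn with he
  have hrange : ∀ i : Fin c, (i : ℕ) ≤ (e i : ℕ) := strictMono_le_apply e.strictMono
  have h1 : ∑ j ∈ T, descSort v j = ∑ i : Fin c, descSort v (e i) := by
    refine (Finset.sum_bij (fun (i : Fin c) _ => e i) ?_ ?_ ?_ ?_).symm
    · intro i _; exact T.orderEmbOfFin_mem hcn i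
    · intro a _ b _ h; exact e.injective h
    · intro j hj
      have : j ∈ Set.range e := by rw [he, Finset.range_orderEmbOfFin]; exact hj
      obtain ⟨i, hi⟩ := this
      exact ⟨i, Finset.mem_univ i, hi⟩
    · intro i _; rfl
  rw [h1]
  have h2 : ∑ i : Fin c, descSort v (e i)
      ≤ ∑ i : Fin c, descSort v ⟨i, lt_of_le_of_lt (hrange i) (e i).isLt⟩ := by
    refine Finset.sum_le_sum fun i _ => ?_
    exact descSort_antitone v (by exact Fin.mk_le_mk.2 (hrange i))
  refine h2.trans ?_
  unfold sumTop
  refine le_of_eq ?_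
  refine Finset.sum_bij
    (fun (i : Fin c) _ => (⟨i, lt_of_le_of_lt (hrange i) (e i).isLt⟩ : Fin n)) ?_ ?_ ?_ ?_
  · intro i _; simp [i.isLt]
  · intro a _ b _ h
    simpa [Fin.ext_iff] using h
  · intro j hj
    simp only [Finset.mem_filter, Finset.mem_univ, true_and] at hj
    exact ⟨⟨j, hj⟩, Finset.mem_univ _, by simp⟩
  · intro i _; rfl

lemma abel_identity (g f : ℕ → ℝ) :
    ∀ m : ℕ, ∑ i ∈ Finset.range m, g i * f i
      = (∑ l ∈ Finset.range m, g l) * f m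
        + ∑ i ∈ Finset.range m, (∑ l ∈ Finset.range (i + 1), g l) * (f i - f (i + 1))
  | 0 => by simp
  | (m + 1) => by
    rw [Finset.sum_range_succ (fun i => g i * f i), abel_identity g f m,
      Finset.sum_range_succ (fun i => (∑ l ∈ Finset.range (i + 1), g l) * (f i - f (i + 1))),
      Finset.sum_range_succ g]
    ring

lemma abel_le (g h f : ℕ → ℝ) (m : ℕ) (hf : Antitone f) (hf0 : ∀ i, 0 ≤ f i)
    (hgh : ∀ j, ∑ i ∈ Finset.range j, g i ≤ ∑ i ∈ Finset.range j, h i) :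
    ∑ i ∈ Finset.range m, g i * f i ≤ ∑ i ∈ Finset.range m, h i * f i := by
  rw [abel_identity g f m, abel_identity h f m]
  refine add_le_add (mul_le_mul_of_nonneg_right (hgh m) (hf0 m)) ?_
  refine Finset.sum_le_sum fun i _ => ?_
  refine mul_le_mul_of_nonneg_right (hgh (i + 1)) ?_
  have := hf (Nat.le_succ i)
  linarith

lemma sum_trunc (f : ℕ → ℝ) (m j : ℕ) :
    ∑ i ∈ Finset.range j, (if i < m then f i else 0) = ∑ i ∈ Finset.range (min j m), f i := by
  rw [← Finset.sum_filter]
  congr 1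
  ext i
  simp only [Finset.mem_filter, Finset.mem_range, Nat.lt_min]

lemma card_filter_lt (m j : ℕ) :
    (Finset.univ.filter (fun i : Fin m => (i : ℕ) < j)).card = min j m := by
  rw [← Finset.card_range (min j m)]
  refine Finset.card_bij (fun i _ => (i : ℕ)) ?_ ?_ ?_
  · intro i hi
    simp only [Finset.mem_filter, Finset.mem_univ, true_and] at hi
    simp only [Finset.mem_range, Nat.lt_min]
    exact ⟨hi, i.isLt⟩
  · intro a _ b _ hab; exact Fin.ext hab
  · intro l hl
    simp only [Finset.mem_range, Nat.lt_min] at hl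
    exact ⟨⟨l, hl.2⟩, by simp [hl.1], rfl⟩

end Aux

/-- If `p ≺ s` and `q ≺ t` in `ℝⁿ`, all vectors having nonnegative
entries, then the Hadamard (entrywise) product satisfies the weak majorization
`p ∘ q ≺_w s↓ ∘ t↓`. -/
theorem weakMajorizes_hadamard {n : ℕ} (p s q t : Fin n → ℝ)
    (hp : ∀ i, 0 ≤ p i) (hs : ∀ i, 0 ≤ s i) (hq : ∀ i, 0 ≤ q i) (ht : ∀ i, 0 ≤ t i)
    (h1 : Majorizes p s) (h2 : Majorizes q t) :
    WeakMajorizes (fun i => p i * q i) (fun i => descSort s i * descSort t i) := by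
  classical
  intro k
  set u : Fin n → ℝ := fun i => p i * q i with hu
  set w : Fin n → ℝ := fun i => descSort s i * descSort t i with hw
  set m : ℕ := min k n with hm
  have hmn : m ≤ n := min_le_right _ _
  set A : Finset (Fin n) :=
    (Finset.univ.filter (fun i : Fin n => (i : ℕ) < k)).image (sortPerm u) with hA
  have hAcard : A.card = m := by
    rw [hA, Finset.card_image_of_injective _ (sortPerm u).injective, card_filter_lt, hm]
  have hL : sumTop u k = ∑ i ∈ A, u i := by
    rw [hA, Finset.sum_image (fun a _ b _ hab => (sortPerm u).injective hab)]
    rfl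
  set e := A.orderEmbOfFin hAcard with he
  set pA : Fin m → ℝ := fun i => p (e i) with hpA
  set qA : Fin m → ℝ := fun i => q (e i) with hqA
  have hApq : ∑ i ∈ A, u i = ∑ i : Fin m, pA i * qA i := by
    refine (Finset.sum_bij (fun (i : Fin m) _ => e i) ?_ ?_ ?_ ?_).symm
    · intro i _; exact A.orderEmbOfFin_mem hAcard i
    · intro i _ j _ hij; exact e.injective hij
    · intro j hj
      have : j ∈ Set.range e := by rw [he, Finset.range_orderEmbOfFin]; exact hj
      obtain ⟨i, hi⟩ := this
      exact ⟨i, Finset.mem_univ i, hi⟩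
    · intro i _; rfl
  set a : Fin m → ℝ := descSort pA with ha
  set b : Fin m → ℝ := descSort qA with hb
  have ha0 : ∀ i, 0 ≤ a i := descSort_nonneg (fun i => hp _)
  have hb0 : ∀ i, 0 ≤ b i := descSort_nonneg (fun i => hq _)
  -- rearrangement inequality within `A`
  have hre : ∑ i : Fin m, pA i * qA i ≤ ∑ i : Fin m, a i * b i := by
    have hmv : Monovary a b := (descSort_antitone pA).monovary (descSort_antitone qA)
    set τ : Equiv.Perm (Fin m) := (sortPerm pA).trans (sortPerm qA).symm with hτ
    have h3 : ∑ i : Fin m, pA i * qA i = ∑ i : Fin m, a i * b (τ i) := by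
      rw [← Equiv.sum_comp (sortPerm pA) (fun i => pA i * qA i)]
      refine Finset.sum_congr rfl fun i _ => ?_
      rw [ha, hb, descSort_eq, descSort_eq]
      simp [hτ]
    rw [h3]
    exact hmv.sum_mul_comp_perm_le_sum_mul
  -- pass to sequences over ℕ
  set a' : ℕ → ℝ := extF a with ha'
  set b' : ℕ → ℝ := extF b with hb'
  set c' : ℕ → ℝ := fun i => if i < m then extF (descSort s) i else 0 with hc'
  set d' : ℕ → ℝ := fun i => if i < m then extF (descSort t) i else 0 with hd'
  have hb'anti : Antitone b' := extF_antitone (descSort_antitone qA) hb0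
  have hb'0 : ∀ i, 0 ≤ b' i := extF_nonneg hb0
  have hcs0 : ∀ i, 0 ≤ descSort s i := descSort_nonneg hs
  have hdt0 : ∀ i, 0 ≤ descSort t i := descSort_nonneg ht
  have hc'anti : Antitone c' := by
    intro i j hij
    rw [hc']
    dsimp only
    by_cases hjm : j < m
    · rw [if_pos hjm, if_pos (lt_of_le_of_lt hij hjm)]
      exact extF_antitone (descSort_antitone s) hcs0 hij
    · rw [if_neg hjm]
      split
      · exact extF_nonneg hcs0 i
      · exact le_refl 0
  have hc'0 : ∀ i, 0 ≤ c' i := by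
    intro i; rw [hc']; dsimp only; split
    · exact extF_nonneg hcs0 i
    · exact le_refl 0
  -- the partial sum comparisons
  have key : ∀ (v V : Fin n → ℝ) (vA : Fin m → ℝ), (∀ i, vA i = v (e i)) → (∀ i, 0 ≤ v i) →
      (∀ j, sumTop v j ≤ sumTop V j) →
      ∀ j : ℕ, ∑ i ∈ Finset.range j, extF (descSort vA) i
        ≤ ∑ i ∈ Finset.range j, (if i < m then extF (descSort V) i else 0) := by
    intro v V vA hvA hv0 hvV j
    rw [sum_trunc, sum_extF, sum_extF]
    have hL1 : (∑ i ∈ Finset.univ.filter (fun i : Fin m => (i : ℕ) < j), descSort vA i)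
        = sumTop vA j := rfl
    have hR1 : (∑ i ∈ Finset.univ.filter (fun i : Fin n => (i : ℕ) < min j m), descSort V i)
        = sumTop V (min j m) := rfl
    rw [hL1, hR1, sumTop_min vA j]
    have hmin : min j m = min (min j m) m := by omega
    have h4 : sumTop vA (min j m) ≤ sumTop v (min j m) := by
      have h5 : sumTop vA (min j m)
          = ∑ i ∈ Finset.univ.filter (fun i : Fin m => (i : ℕ) < min j m),
              v (e (sortPerm vA i)) := by
        refine Finset.sum_congr rfl fun i _ => ?_
        rw [descSort_eq, hvA]
      rw [h5]
      have h6 := sum_le_sumTop v (fun i => e (sortPerm vA i))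
        (e.injective.comp (sortPerm vA).injective)
        (Finset.univ.filter (fun i : Fin m => (i : ℕ) < min j m))
      rwa [card_filter_lt, ← hmin] at h6
    exact h4.trans (hvV (min j m))
  have hac : ∀ j, ∑ i ∈ Finset.range j, a' i ≤ ∑ i ∈ Finset.range j, c' i :=
    key p s pA (fun i => rfl) hp h1.1
  have hbd : ∀ j, ∑ i ∈ Finset.range j, b' i ≤ ∑ i ∈ Finset.range j, d' i :=
    key q t qA (fun i => rfl) hq h2.1
  have step1 : ∑ i ∈ Finset.range m, a' i * b' i ≤ ∑ i ∈ Finset.range m, c' i * b' i :=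
    abel_le a' c' b' m hb'anti hb'0 hac
  have step2 : ∑ i ∈ Finset.range m, b' i * c' i ≤ ∑ i ∈ Finset.range m, d' i * c' i :=
    abel_le b' d' c' m hc'anti hc'0 hbd
  have hfin : ∑ i : Fin m, a i * b i = ∑ i ∈ Finset.range m, a' i * b' i := by
    rw [← Fin.sum_univ_eq_sum_range (fun i => a' i * b' i) m]
    refine Finset.sum_congr rfl fun i _ => ?_
    rw [ha', hb']
    simp [extF, i.isLt]
  have hRHS : ∑ i ∈ Finset.range m, c' i * d' i ≤ sumTop w k := by
    have h7 : ∑ i ∈ Finset.range m, c' i * d' i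
        = ∑ i ∈ Finset.univ.filter (fun i : Fin n => (i : ℕ) < m), w i := by
      rw [← sum_extF w m]
      refine Finset.sum_congr rfl fun i hi => ?_
      rw [Finset.mem_range] at hi
      rw [hc', hd']
      dsimp only
      rw [if_pos hi, if_pos hi]
      have hin : i < n := lt_of_lt_of_le hi hmn
      simp [extF, hin, hw]
    rw [h7]
    have h8 := sum_le_sumTop w id Function.injective_id
      (Finset.univ.filter (fun i : Fin n => (i : ℕ) < m))
    rw [card_filter_lt] at h8
    have hmm : min m n = m := by omega
    rw [hmm] at h8
    have h9 : sumTop w k = sumTop w m := by rw [sumTop_min w k, ← hm]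
    rw [h9]
    simpa using h8
  calc sumTop u k = ∑ i ∈ A, u i := hL
    _ = ∑ i : Fin m, pA i * qA i := hApq
    _ ≤ ∑ i : Fin m, a i * b i := hre
    _ = ∑ i ∈ Finset.range m, a' i * b' i := hfin
    _ ≤ ∑ i ∈ Finset.range m, c' i * b' i := step1
    _ = ∑ i ∈ Finset.range m, b' i * c' i := by simp_rw [mul_comm]
    _ ≤ ∑ i ∈ Finset.range m, d' i * c' i := step2
    _ = ∑ i ∈ Finset.range m, c' i * d' i := by simp_rw [mul_comm]
    _ ≤ sumTop w k := hRHS
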